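/- For n ≥ 1, let fₙ = x₁^{3n−1} + ⋯ + xₙ^{3n−1} + (x₁·x₂·⋯·xₙ)³ ∈ ℝ[[x₁,…,xₙ]], let Δ(fₙ) be its Jacobian ideal, and let aₙ = [fₙ] be the class of fₙ in Aₙ = ℝ[[x₁,…,xₙ]]/Δ(fₙ). Then aₙ^{n−1} ≠ 0 and aₙⁿ = 0 in Aₙ; equivalently, fₙ^{n−1} ∉ Δ(fₙ) and fₙⁿ ∈ Δ(fₙ). -/

import Mathlib

/-- The `i`-th formal partial derivative of a multivariate formal power series over `ℝ`. -/
noncomputable def mvPderiv {n : ℕ} (i : Fin n) (f : MvPowerSeries (Fin n) ℝ) :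
    MvPowerSeries (Fin n) ℝ :=
  fun m => (m i + 1 : ℝ) * MvPowerSeries.coeff (m + Finsupp.single i 1) f

/-- The Jacobian ideal Δ(f), generated by the formal partial derivatives of `f`. -/
noncomputable def jacobianIdeal {n : ℕ} (f : MvPowerSeries (Fin n) ℝ) :
    Ideal (MvPowerSeries (Fin n) ℝ) :=
  Ideal.span (Set.range fun i => mvPderiv i f)

/-- `fₙ = x₁^{3n−1} + ⋯ + xₙ^{3n−1} + (x₁⋯xₙ)³`. -/
noncomputable def fExample (n : ℕ) : MvPowerSeries (Fin n) ℝ :=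
  (∑ i : Fin n, MvPowerSeries.X i ^ (3 * n - 1)) + (∏ i : Fin n, MvPowerSeries.X i) ^ 3


/-!
Write `P = x₁⋯xₙ`, `N = 3n − 1` and `γ = −3/N`. Since `xᵢ · ∂ᵢf = N xᵢᴺ + 3P³`, modulo `Δ(f)`
every `xᵢᴺ` is `γP³`, hence `f ≡ (nγ + 1)P³ = −P³/N`; so `fᵏ ∈ Δ(f)` iff `P³ᵏ ∈ Δ(f)`.
Expanding `P³ⁿ = ∏ xᵢ · xᵢᴺ` gives `P³ⁿ ≡ γⁿ P · P³ⁿ`, and `1 − γⁿP` is a unit, so `P³ⁿ ∈ Δ(f)`.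
For `P³⁽ⁿ⁻¹⁾ ∉ Δ(f)` we exhibit a linear functional on `ℝ[[x]]`, reading finitely many
coefficients, that kills every `h · ∂ᵢf` but takes the value `1` on `P³⁽ⁿ⁻¹⁾`: an element of
Macaulay's inverse system of `Δ(f)`.
-/

open MvPowerSeries Finsupp

namespace MvPowerSeries

variable {σ R : Type*}

theorem pderiv_monomial [CommSemiring R] (i : σ) (m : σ →₀ ℕ) (a : R) :
    pderiv R i (monomial m a) = monomial (m - single i 1) (a * m i) := by
  rw [← MvPolynomial.coe_monomial, pderiv_coe, MvPolynomial.pderiv_monomial,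
    MvPolynomial.coe_monomial]

section WeightedCoeffSum

variable [DecidableEq σ] [CommSemiring R]

noncomputable def weightedCoeffSum (c : σ →₀ ℕ) (w : (σ →₀ ℕ) → R) (F : MvPowerSeries σ R) :
    R :=
  ∑ b ∈ Finset.Iic c, w b * coeff b F

variable {c : σ →₀ ℕ} {w : (σ →₀ ℕ) → R}

theorem weightedCoeffSum_monomial (hw : ∀ b, w b ≠ 0 → b ≤ c) (m : σ →₀ ℕ) (a : R) :
    weightedCoeffSum c w (monomial m a) = w m * a := by
  rw [weightedCoeffSum,
    Finset.sum_eq_single m (fun b _ hb => by rw [coeff_monomial_ne hb, mul_zero]) (fun hm => ?_),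
    coeff_monomial_same]
  rw [not_not.mp (mt (hw m) (fun h => hm (Finset.mem_Iic.mpr h))), zero_mul]

theorem weightedCoeffSum_mul_monomial (hw : ∀ b, w b ≠ 0 → b ≤ c) (F : MvPowerSeries σ R)
    (e : σ →₀ ℕ) (r : R) :
    weightedCoeffSum c w (F * monomial e r) = r * weightedCoeffSum c (fun a => w (a + e)) F := by
  simp only [weightedCoeffSum, coeff_mul_monomial, Finset.mul_sum]
  symm
  refine Finset.sum_bij_ne_zero (fun a _ _ => a + e) (fun a _ ha => ?_)
    (fun _ _ _ _ _ _ => add_right_cancel) (fun b hb hne => ?_) (fun a _ _ => ?_)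
  · exact Finset.mem_Iic.mpr (hw _ (left_ne_zero_of_mul (right_ne_zero_of_mul ha)))
  · have heb : e ≤ b := by
      by_contra h
      exact hne (by rw [if_neg h, mul_zero])
    refine ⟨b - e, Finset.mem_Iic.mpr (tsub_le_self.trans (Finset.mem_Iic.mp hb)), ?_,
      tsub_add_cancel_of_le heb⟩
    rw [if_pos heb] at hne
    rw [tsub_add_cancel_of_le heb]
    exact fun h => hne (by rw [← h]; ring)
  · rw [if_pos le_add_self, add_tsub_cancel_right]
    ring

theorem weightedCoeffSum_add (F G : MvPowerSeries σ R) :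
    weightedCoeffSum c w (F + G) = weightedCoeffSum c w F + weightedCoeffSum c w G := by
  simp only [weightedCoeffSum, map_add, mul_add, Finset.sum_add_distrib]

theorem weightedCoeffSum_eq_zero_of_mem_span {ι : Type*} [Fintype ι] {g : ι → MvPowerSeries σ R}
    (hg : ∀ i F, weightedCoeffSum c w (F * g i) = 0) {x : MvPowerSeries σ R}
    (hx : x ∈ Ideal.span (Set.range g)) : weightedCoeffSum c w x = 0 := by
  obtain ⟨F, rfl⟩ := Ideal.mem_span_range_iff_exists_fun.mp hx
  have hsum : weightedCoeffSum c w (∑ i, F i * g i) = ∑ i, weightedCoeffSum c w (F i * g i) := by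
    simp only [weightedCoeffSum, map_sum, Finset.mul_sum]
    exact Finset.sum_comm
  rw [hsum]
  exact Finset.sum_eq_zero fun i _ => hg i (F i)

end WeightedCoeffSum

end MvPowerSeries

namespace FExample

variable {n : ℕ}

noncomputable def constExp (n k : ℕ) : Fin n →₀ ℕ := equivFunOnFinite.symm fun _ => k

@[simp] theorem constExp_apply (k : ℕ) (j : Fin n) : constExp n k j = k := rfl

theorem degree_constExp (k : ℕ) : degree (constExp n k) = n * k := by
  simp [degree_eq_sum]

theorem prod_X_pow (k : ℕ) :
    (∏ i : Fin n, (X i : MvPowerSeries (Fin n) ℝ)) ^ k = monomial (constExp n k) 1 := by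
  rw [Finset.prod_congr rfl fun i _ => X_def i, prod_monomial, Finset.prod_const_one, monomial_pow,
    one_pow]
  congr 2
  refine Finsupp.ext fun j => ?_
  simp [single_apply]

theorem fExample_eq_sum_monomial :
    fExample n = ∑ j, monomial (single j (3 * n - 1)) 1 + monomial (constExp n 3) 1 := by
  simp only [fExample, X_pow_eq, prod_X_pow]

theorem pderiv_fExample (hn : 1 ≤ n) (i : Fin n) :
    pderiv ℝ i (fExample n) =
      monomial (single i (3 * n - 2)) (3 * n - 1 : ℝ) + monomial (constExp n 3 - single i 1) 3 := by
  rw [fExample_eq_sum_monomial, map_add, map_sum, Fintype.sum_eq_single i, pderiv_monomial,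
    pderiv_monomial, ← single_tsub, single_eq_same, constExp_apply]
  · congr 2
    · rw [one_mul, Nat.cast_sub (by omega)]
      push_cast
      ring
    · norm_num
  · intro j hj
    rw [pderiv_monomial, single_eq_of_ne' hj]
    simp

theorem jacobianIdeal_eq_span_pderiv (f : MvPowerSeries (Fin n) ℝ) :
    jacobianIdeal f = Ideal.span (Set.range fun i => pderiv ℝ i f) := by
  unfold jacobianIdeal
  congr 2
  funext i
  ext m
  rw [coeff_pderiv, mul_comm]
  rfl

theorem X_mul_pderiv_fExample (hn : 1 ≤ n) (i : Fin n) :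
    X i * pderiv ℝ i (fExample n) = (3 * n - 1 : ℝ) • X i ^ (3 * n - 1) +
      (3 : ℝ) • (∏ j : Fin n, (X j : MvPowerSeries (Fin n) ℝ)) ^ 3 := by
  rw [pderiv_fExample hn, X_pow_eq, prod_X_pow, X_def, mul_add, monomial_mul_monomial,
    monomial_mul_monomial, one_mul, one_mul, ← single_add,
    add_tsub_cancel_of_le (single_le_iff.mpr (by simp)), ← map_smul, ← map_smul, smul_eq_mul,
    smul_eq_mul, mul_one, mul_one, show 1 + (3 * n - 2) = 3 * n - 1 by omega]

theorem three_mul_sub_one_ne_zero (hn : 1 ≤ n) : (3 * n - 1 : ℝ) ≠ 0 := by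
  have : (1 : ℝ) ≤ n := by exact_mod_cast hn
  linarith

theorem mk_X_pow (hn : 1 ≤ n) (i : Fin n) :
    Ideal.Quotient.mkₐ ℝ (jacobianIdeal (fExample n)) (X i) ^ (3 * n - 1) =
      (-3 / (3 * n - 1) : ℝ) •
        Ideal.Quotient.mkₐ ℝ (jacobianIdeal (fExample n)) (∏ j, X j) ^ 3 := by
  set π := Ideal.Quotient.mkₐ ℝ (jacobianIdeal (fExample n))
  have hN := three_mul_sub_one_ne_zero hn
  have hrel : (3 * n - 1 : ℝ) • π (X i) ^ (3 * n - 1) + (3 : ℝ) • π (∏ j, X j) ^ 3 = 0 := by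
    rw [← map_pow, ← map_pow, ← map_smul, ← map_smul, ← map_add, ← X_mul_pderiv_fExample hn,
      Ideal.Quotient.mkₐ_eq_mk, Ideal.Quotient.eq_zero_iff_mem, jacobianIdeal_eq_span_pderiv]
    exact Ideal.mul_mem_left _ _ (Ideal.subset_span ⟨i, rfl⟩)
  apply smul_right_injective _ hN
  dsimp only
  rw [eq_neg_of_add_eq_zero_left hrel, smul_smul, mul_div_cancel₀ _ hN, neg_smul]

theorem mk_fExample (hn : 1 ≤ n) :
    Ideal.Quotient.mkₐ ℝ (jacobianIdeal (fExample n)) (fExample n) =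
      (-(3 * n - 1 : ℝ)⁻¹) • Ideal.Quotient.mkₐ ℝ (jacobianIdeal (fExample n)) (∏ j, X j) ^ 3 := by
  have hcoeff : (n : ℝ) * (-3 / (3 * n - 1)) + 1 = -(3 * n - 1 : ℝ)⁻¹ := by
    linear_combination -(mul_inv_cancel₀ (three_mul_sub_one_ne_zero hn))
  have hx := mk_X_pow hn
  generalize Ideal.Quotient.mkₐ ℝ (jacobianIdeal (fExample n)) = π at hx ⊢
  show π (∑ i, X i ^ (3 * n - 1) + (∏ i, X i) ^ 3) = _
  simp_rw [map_add, map_sum, map_pow, hx]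
  rw [Finset.sum_const, Finset.card_univ, Fintype.card_fin, ← hcoeff, add_smul, one_smul, mul_smul,
    Nat.cast_smul_eq_nsmul]

theorem isUnit_one_sub_smul_prod_X (hn : 1 ≤ n) (c : ℝ) :
    IsUnit (1 - c • ∏ j : Fin n, (X j : MvPowerSeries (Fin n) ℝ)) := by
  simp [isUnit_iff_constantCoeff, zero_pow (Nat.one_le_iff_ne_zero.mp hn)]

theorem prod_X_pow_mem_jacobianIdeal (hn : 1 ≤ n) :
    (∏ i : Fin n, (X i : MvPowerSeries (Fin n) ℝ)) ^ (3 * n) ∈ jacobianIdeal (fExample n) := by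
  set π := Ideal.Quotient.mkₐ ℝ (jacobianIdeal (fExample n))
  set P := ∏ i : Fin n, (X i : MvPowerSeries (Fin n) ℝ)
  set γ : ℝ := -3 / (3 * n - 1)
  have hx : ∀ i, π (X i) ^ (3 * n - 1) = γ • π P ^ 3 := mk_X_pow hn
  have hfix : π P ^ (3 * n) = γ ^ n • (π P * π P ^ (3 * n)) :=
    calc π P ^ (3 * n) = ∏ i, π (X i) * π (X i) ^ (3 * n - 1) := by
          rw [map_prod, ← Finset.prod_pow]
          refine Finset.prod_congr rfl fun i _ => ?_
          rw [← pow_succ', show 3 * n - 1 + 1 = 3 * n by omega]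
      _ = π P * (γ • π P ^ 3) ^ n := by
          simp_rw [hx]
          rw [Finset.prod_mul_distrib, Finset.prod_const, Finset.card_univ, Fintype.card_fin,
            map_prod]
      _ = γ ^ n • (π P * π P ^ (3 * n)) := by
          rw [smul_pow, ← pow_mul, mul_smul_comm]
  have hzero : (1 - γ ^ n • π P) * π P ^ (3 * n) = 0 := by
    rw [sub_mul, one_mul, smul_mul_assoc, ← hfix, sub_self]
  have hunit : IsUnit (1 - γ ^ n • π P) := by
    have := (isUnit_one_sub_smul_prod_X hn (γ ^ n)).map π
    rwa [map_sub, map_one, map_smul] at this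
  rw [← Ideal.Quotient.eq_zero_iff_mem, ← Ideal.Quotient.mkₐ_eq_mk ℝ, map_pow]
  exact hunit.mul_right_eq_zero.mp hzero

def IsDualExponent (n s : ℕ) (b : Fin n →₀ ℕ) : Prop :=
  ∀ j, 3 * n - 1 ∣ b j + 3 * s + 2

/- With `q = (3n−3, …, 3n−3)` and `s = deg q − deg b`, the divisibility condition says that
`b = q − s·(3, …, 3) + N·k` for some `k ∈ ℕⁿ` (then `|k| = s`); such `b` get weight `γˢ`. -/
open Classical in
noncomputable def dualWeight (n : ℕ) (b : Fin n →₀ ℕ) : ℝ :=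
  if degree b ≤ n * (3 * n - 3) ∧ IsDualExponent n (n * (3 * n - 3) - degree b) b then
    (-3 / (3 * n - 1) : ℝ) ^ (n * (3 * n - 3) - degree b)
  else 0

theorem isDualExponent_succ_iff (hn : 1 ≤ n) (s : ℕ) (a : Fin n →₀ ℕ) (i : Fin n) :
    IsDualExponent n (s + 1) (a + single i (3 * n - 2)) ↔
      IsDualExponent n s (a + (constExp n 3 - single i 1)) := by
  refine forall_congr' fun j => ?_
  by_cases hj : j = i
  · subst hj
    simp only [coe_add, coe_tsub, Pi.add_apply, Pi.sub_apply, single_eq_same, constExp_apply]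
    rw [show a j + (3 * n - 2) + 3 * (s + 1) + 2 = a j + (3 - 1) + 3 * s + 2 + (3 * n - 1) by omega,
      Nat.dvd_add_self_right]
  · simp only [coe_add, coe_tsub, Pi.add_apply, Pi.sub_apply, single_eq_of_ne hj, constExp_apply]
    rw [show a j + 0 + 3 * (s + 1) + 2 = a j + (3 - 0) + 3 * s + 2 by omega]

theorem eq_constExp_of_isDualExponent_zero (hn : 1 ≤ n) {b : Fin n →₀ ℕ} (hb : IsDualExponent n 0 b)
    (hdeg : degree b ≤ n * (3 * n - 3)) : b = constExp n (3 * n - 3) := by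
  have hle : constExp n (3 * n - 3) ≤ b := fun j => by
    have := Nat.le_of_dvd (by omega) (hb j)
    simp only [constExp_apply]
    omega
  obtain ⟨d, rfl⟩ := le_iff_exists_add.mp hle
  rw [map_add, degree_constExp] at hdeg
  rw [(degree_eq_zero_iff d).mp (by omega), add_zero]

theorem dualWeight_constExp (hn : 1 ≤ n) : dualWeight n (constExp n (3 * n - 3)) = 1 := by
  have hdual : IsDualExponent n (n * (3 * n - 3) - n * (3 * n - 3)) (constExp n (3 * n - 3)) :=
    fun j => by rw [Nat.sub_self, constExp_apply, show 3 * n - 3 + 3 * 0 + 2 = 3 * n - 1 by omega]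
  rw [dualWeight, degree_constExp, if_pos ⟨le_rfl, hdual⟩, Nat.sub_self, pow_zero]

theorem le_of_dualWeight_ne_zero {b : Fin n →₀ ℕ} (hb : dualWeight n b ≠ 0) :
    b ≤ constExp n (n * (3 * n - 3)) := by
  rw [dualWeight] at hb
  split_ifs at hb with h
  · exact fun j => (le_degree j b).trans h.1
  · exact absurd rfl hb

theorem dualWeight_relation (hn : 1 ≤ n) (a : Fin n →₀ ℕ) (i : Fin n) :
    (3 * n - 1 : ℝ) * dualWeight n (a + single i (3 * n - 2)) +
      3 * dualWeight n (a + (constExp n 3 - single i 1)) = 0 := by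
  have hdegE : degree (a + single i (3 * n - 2)) = degree a + (3 * n - 2) := by
    rw [map_add, degree_single]
  have hdegW : degree (a + (constExp n 3 - single i 1)) = degree a + (3 * n - 1) := by
    have h := degree_constExp (n := n) 3
    rw [← tsub_add_cancel_of_le (single_le_iff.mpr (by simp) : single i 1 ≤ constExp n 3),
      map_add, degree_single] at h
    rw [map_add]
    omega
  by_cases hle : degree a + (3 * n - 1) ≤ n * (3 * n - 3)
  · rw [dualWeight, dualWeight, hdegE, hdegW,
      show n * (3 * n - 3) - (degree a + (3 * n - 2)) =
        n * (3 * n - 3) - (degree a + (3 * n - 1)) + 1 by omega,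
      isDualExponent_succ_iff hn]
    split_ifs with h1 h2 h2
    · rw [pow_succ, show ∀ x y : ℝ, (3 * n - 1) * (x * y) + 3 * x = x * ((3 * n - 1) * y + 3)
        from fun x y => by ring, mul_div_cancel₀ _ (three_mul_sub_one_ne_zero hn)]
      ring
    · exact absurd ⟨by omega, h1.2⟩ h2
    · exact absurd ⟨by omega, h2.2⟩ h1
    · ring
  · have hW : dualWeight n (a + (constExp n 3 - single i 1)) = 0 := by
      rw [dualWeight, if_neg (by rw [hdegW]; exact fun h => hle h.1)]
    have hE : dualWeight n (a + single i (3 * n - 2)) = 0 := by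
      rw [dualWeight, if_neg]
      rintro ⟨hdeg, hdual⟩
      rw [hdegE] at hdeg hdual
      rw [show n * (3 * n - 3) - (degree a + (3 * n - 2)) = 0 by omega] at hdual
      have := DFunLike.congr_fun (eq_constExp_of_isDualExponent_zero hn hdual (by omega)) i
      simp only [coe_add, Pi.add_apply, single_eq_same, constExp_apply] at this
      omega
    rw [hW, hE]
    ring

theorem weightedCoeffSum_mul_pderiv_fExample (hn : 1 ≤ n) (i : Fin n)
    (F : MvPowerSeries (Fin n) ℝ) :
    weightedCoeffSum (constExp n (n * (3 * n - 3))) (dualWeight n)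
      (F * pderiv ℝ i (fExample n)) = 0 := by
  rw [pderiv_fExample hn, mul_add, weightedCoeffSum_add,
    weightedCoeffSum_mul_monomial (fun _ => le_of_dualWeight_ne_zero),
    weightedCoeffSum_mul_monomial (fun _ => le_of_dualWeight_ne_zero)]
  simp only [weightedCoeffSum, Finset.mul_sum, ← Finset.sum_add_distrib]
  refine Finset.sum_eq_zero fun a _ => ?_
  linear_combination coeff a F * dualWeight_relation hn a i

theorem prod_X_pow_notMem_jacobianIdeal (hn : 1 ≤ n) :
    (∏ i : Fin n, (X i : MvPowerSeries (Fin n) ℝ)) ^ (3 * (n - 1)) ∉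
      jacobianIdeal (fExample n) := by
  intro hmem
  rw [jacobianIdeal_eq_span_pderiv] at hmem
  have h := weightedCoeffSum_eq_zero_of_mem_span (weightedCoeffSum_mul_pderiv_fExample hn) hmem
  rw [prod_X_pow, weightedCoeffSum_monomial (fun _ => le_of_dualWeight_ne_zero),
    show 3 * (n - 1) = 3 * n - 3 by omega, dualWeight_constExp hn, mul_one] at h
  exact one_ne_zero h

theorem mk_fExample_pow_eq_zero_iff (hn : 1 ≤ n) (k : ℕ) :
    Ideal.Quotient.mk (jacobianIdeal (fExample n)) (fExample n) ^ k = 0 ↔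
      (∏ i : Fin n, (X i : MvPowerSeries (Fin n) ℝ)) ^ (3 * k) ∈ jacobianIdeal (fExample n) := by
  have hc : (-(3 * n - 1 : ℝ)⁻¹) ^ k ≠ 0 :=
    pow_ne_zero _ (neg_ne_zero.mpr (inv_ne_zero (three_mul_sub_one_ne_zero hn)))
  rw [← Ideal.Quotient.mkₐ_eq_mk ℝ, mk_fExample hn, smul_pow, smul_eq_zero_iff_right hc, ← map_pow,
    ← map_pow, ← pow_mul, Ideal.Quotient.mkₐ_eq_mk, Ideal.Quotient.eq_zero_iff_mem]

end FExample

theorem stmt_6 (n : ℕ) (hn : 1 ≤ n) :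
    (Ideal.Quotient.mk (jacobianIdeal (fExample n)) (fExample n)) ^ (n - 1) ≠ 0 ∧
    (Ideal.Quotient.mk (jacobianIdeal (fExample n)) (fExample n)) ^ n = 0 ∧
    fExample n ^ (n - 1) ∉ jacobianIdeal (fExample n) ∧
    fExample n ^ n ∈ jacobianIdeal (fExample n) := by
  have hlow := (FExample.mk_fExample_pow_eq_zero_iff hn (n - 1)).not.mpr
    (FExample.prod_X_pow_notMem_jacobianIdeal hn)
  have htop := (FExample.mk_fExample_pow_eq_zero_iff hn n).mpr
    (mul_comm 3 n ▸ FExample.prod_X_pow_mem_jacobianIdeal hn)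
  exact ⟨hlow, htop, fun h => hlow (by rwa [← map_pow, Ideal.Quotient.eq_zero_iff_mem]),
    by rwa [← Ideal.Quotient.eq_zero_iff_mem, map_pow]⟩
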